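/- For a workload that is a weighted stack of Kronecker products W = [w_1 W^{(1)}_1 ⊗ ⋯ ⊗ W^{(1)}_d ; … ; w_k W^{(k)}_1 ⊗ ⋯ ⊗ W^{(k)}_d] and a Kronecker product strategy A = A_1 ⊗ ⋯ ⊗ A_d, ||W A^+||_F^2 = Σ_{j=1}^k w_j^2 ∏_{i=1}^d ||W^{(j)}_i A_i^+||_F^2. -/
import Mathlib


open Matrix

/-- `B` is the Moore–Penrose pseudoinverse of `A`. -/
def IsMoorePenrose {m n : Type*} [Fintype m] [Fintype n]
    (A : Matrix m n ℝ) (B : Matrix n m ℝ) : Prop :=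
  A * B * A = A ∧ B * A * B = B ∧ (A * B)ᵀ = A * B ∧ (B * A)ᵀ = B * A

/-- d-fold Kronecker product of matrices, indexed by dependent products. -/
def kronD {d : ℕ} {m n : Fin d → Type*} [∀ i, Fintype (m i)] [∀ i, Fintype (n i)]
    (A : ∀ i, Matrix (m i) (n i) ℝ) : Matrix (∀ i, m i) (∀ i, n i) ℝ :=
  Matrix.of fun r c => ∏ i, A i (r i) (c i)

/-- Squared Frobenius norm of a matrix. -/
def frobSq {m n : Type*} [Fintype m] [Fintype n] (M : Matrix m n ℝ) : ℝ :=
  ∑ i, ∑ j, (M i j) ^ 2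

/-- Vertical stacking of the `k` scaled Kronecker products `wⱼ • (W₁⁽ʲ⁾ ⊗ ⋯ ⊗ W_d⁽ʲ⁾)`. -/
def stackKron {k d : ℕ} {m : Fin k → Fin d → Type*} {n : Fin d → Type*}
    [∀ j i, Fintype (m j i)] [∀ i, Fintype (n i)]
    (w : Fin k → ℝ) (W : ∀ j i, Matrix (m j i) (n i) ℝ) :
    Matrix (Σ j : Fin k, ∀ i, m j i) (∀ i, n i) ℝ :=
  Matrix.of fun r c => w r.1 * ∏ i, W r.1 i (r.2 i) (c i)

/-- Mixed product property for `kronD`. -/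
lemma kronD_mul {d : ℕ} {m p n : Fin d → Type*} [∀ i, Fintype (m i)]
    [∀ i, Fintype (p i)] [∀ i, Fintype (n i)]
    (A : ∀ i, Matrix (m i) (p i) ℝ) (B : ∀ i, Matrix (p i) (n i) ℝ) :
    kronD A * kronD B = kronD (fun i => A i * B i) := by
  ext r c
  simp only [kronD, Matrix.mul_apply, Matrix.of_apply, ← Finset.prod_mul_distrib]
  rw [Finset.prod_univ_sum, ← Fintype.piFinset_univ]

lemma kronD_transpose {d : ℕ} {m n : Fin d → Type*} [∀ i, Fintype (m i)]
    [∀ i, Fintype (n i)] (A : ∀ i, Matrix (m i) (n i) ℝ) :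
    (kronD A)ᵀ = kronD (fun i => (A i)ᵀ) := by
  ext r c; rfl

/-- The Kronecker product of pseudoinverses is a pseudoinverse of the Kronecker product. -/
lemma isMoorePenrose_kronD {d : ℕ} {m n : Fin d → Type*} [∀ i, Fintype (m i)]
    [∀ i, Fintype (n i)] (A : ∀ i, Matrix (m i) (n i) ℝ) (B : ∀ i, Matrix (n i) (m i) ℝ)
    (h : ∀ i, IsMoorePenrose (A i) (B i)) :
    IsMoorePenrose (kronD A) (kronD B) := by
  refine ⟨?_, ?_, ?_, ?_⟩
  · rw [kronD_mul, kronD_mul]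
    exact congrArg kronD (funext fun i => (h i).1)
  · rw [kronD_mul, kronD_mul]
    exact congrArg kronD (funext fun i => (h i).2.1)
  · rw [kronD_mul, kronD_transpose]
    exact congrArg kronD (funext fun i => (h i).2.2.1)
  · rw [kronD_mul, kronD_transpose]
    exact congrArg kronD (funext fun i => (h i).2.2.2)

/-- Uniqueness of the Moore–Penrose pseudoinverse. -/
lemma isMoorePenrose_unique {m n : Type*} [Fintype m] [Fintype n]
    (A : Matrix m n ℝ) (B C : Matrix n m ℝ)
    (hB : IsMoorePenrose A B) (hC : IsMoorePenrose A C) : B = C := by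
  obtain ⟨hB1, hB2, hB3, hB4⟩ := hB
  obtain ⟨hC1, hC2, hC3, hC4⟩ := hC
  have hAB : A * B = A * C := by
    calc A * B = (A * B)ᵀ := hB3.symm
    _ = Bᵀ * (A * C * A)ᵀ := by rw [hC1]; simp [Matrix.transpose_mul, Matrix.mul_assoc]
    _ = (A * B)ᵀ * (A * C)ᵀ := by simp [Matrix.transpose_mul, Matrix.mul_assoc]
    _ = (A * B) * (A * C) := by rw [hB3, hC3]
    _ = (A * B * A) * C := by simp [Matrix.mul_assoc]
    _ = A * C := by rw [hB1]
  have hBA : B * A = C * A := by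
    calc B * A = (B * A)ᵀ := hB4.symm
    _ = (A * C * A)ᵀ * Bᵀ := by rw [hC1]; simp [Matrix.transpose_mul, Matrix.mul_assoc]
    _ = (C * A)ᵀ * (B * A)ᵀ := by simp [Matrix.transpose_mul, Matrix.mul_assoc]
    _ = (C * A) * (B * A) := by rw [hB4, hC4]
    _ = C * (A * B * A) := by simp [Matrix.mul_assoc]
    _ = C * A := by rw [hB1]
  calc B = B * A * B := hB2.symm
  _ = B * (A * C) := by rw [Matrix.mul_assoc, hAB]
  _ = (B * A) * C := by rw [Matrix.mul_assoc]
  _ = C * A * C := by rw [hBA]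
  _ = C := hC2

/-- Frobenius norm of a Kronecker product factors as a product. -/
lemma frobSq_kronD {d : ℕ} {m n : Fin d → Type*} [∀ i, Fintype (m i)]
    [∀ i, Fintype (n i)] (A : ∀ i, Matrix (m i) (n i) ℝ) :
    frobSq (kronD A) = ∏ i, frobSq (A i) := by
  unfold frobSq kronD
  simp only [Matrix.of_apply, ← Finset.prod_pow]
  rw [Finset.prod_univ_sum (t := fun i => (Finset.univ : Finset (m i)))]
  rw [← Fintype.piFinset_univ]
  apply Finset.sum_congr rfl
  intro r _
  rw [Finset.prod_univ_sum, ← Fintype.piFinset_univ]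

/-- Error of a union-of-products workload under a Kronecker product strategy:
`‖W A⁺‖_F² = Σⱼ wⱼ² ∏ᵢ ‖Wᵢ⁽ʲ⁾ Aᵢ⁺‖_F²`. -/
theorem error_decomposition_union {k d : ℕ} {m : Fin k → Fin d → Type*} {n s : Fin d → Type*}
    [∀ j i, Fintype (m j i)] [∀ i, Fintype (n i)] [∀ i, Fintype (s i)]
    (w : Fin k → ℝ) (W : ∀ j i, Matrix (m j i) (n i) ℝ)
    (A : ∀ i, Matrix (s i) (n i) ℝ) (Ap : ∀ i, Matrix (n i) (s i) ℝ)
    (Cp : Matrix (∀ i, n i) (∀ i, s i) ℝ)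
    (hAp : ∀ i, IsMoorePenrose (A i) (Ap i))
    (hCp : IsMoorePenrose (kronD A) Cp)
    (hsupp : ∀ j i, W j i * Ap i * A i = W j i) :
    frobSq (stackKron w W * Cp) = ∑ j, (w j) ^ 2 * ∏ i, frobSq (W j i * Ap i) := by
  have hCp' : Cp = kronD Ap :=
    isMoorePenrose_unique (kronD A) Cp (kronD Ap) hCp (isMoorePenrose_kronD A Ap hAp)
  subst hCp'
  have hentry : ∀ (j : Fin k) (r : ∀ i, m j i) (c : ∀ i, s i),
      (stackKron w W * kronD Ap) ⟨j, r⟩ c = w j * (kronD (fun i => W j i * Ap i)) r c := by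
    intro j r c
    have := congrFun (congrFun (kronD_mul (fun i => W j i) Ap) r) c
    simp only [Matrix.mul_apply, stackKron, kronD, Matrix.of_apply] at this ⊢
    rw [← this]
    simp [Finset.mul_sum, mul_assoc]
  unfold frobSq
  rw [← Finset.univ_sigma_univ, Finset.sum_sigma]
  apply Finset.sum_congr rfl
  intro j _
  have hsq : ∀ (r : ∀ i, m j i) (c : ∀ i, s i),
      (stackKron w W * kronD Ap) ⟨j, r⟩ c ^ 2
        = w j ^ 2 * (kronD (fun i => W j i * Ap i) r c) ^ 2 := by
    intro r c; rw [hentry, mul_pow]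
  simp only [hsq, ← Finset.mul_sum]
  congr 1
  have h := frobSq_kronD (fun i => W j i * Ap i)
  unfold frobSq at h
  exact h
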